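/- In ℝ³, for 0 < ε ≤ 1/2, the point a₃* = (ε², ε², ε²) lies on the boundary of the cube Π* = [-ε²,ε²]³, and the dual lattice Λ₁* = (Aᵀ)^{-1}ℤ³ (with A as in the paper's example) satisfies Π* ∩ Λ₁* = {0, ±a₃*} and int(Π*) ∩ Λ₁* = {0}; hence μ₁(Π*, Λ₁*) = 1. -/

import Mathlib

open Matrix
open scoped BigOperators Pointwise

/-- The first successive minimum of a set `M ⊆ ℝ³` with respect to a lattice
(given as a set) `Λ ⊆ ℝ³`. -/
noncomputable def firstMin (Λ : Set (Fin 3 → ℝ)) (M : Set (Fin 3 → ℝ)) : ℝ :=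
  sInf {μ : ℝ | 0 < μ ∧ ∃ v ∈ Λ, v ≠ 0 ∧ v ∈ μ • M}

/-!
The columns `a₁*, a₂*` of `(Aᵀ)⁻¹` are orthogonal to `(1,1,1)` and have coordinates of size
`1/(ε√3)`, while `a₃* = (ε², ε², ε²)`. For a lattice point `k a₁* + l a₂* + m a₃*` the differences
of its coordinates are `(k + l)/(ε√3)` and `(2l - k)/(ε√3)`; in the cube `[-ε², ε²]³` they are at
most `2ε²`, which forces the integers `k + l` and `2l - k` below `2√3 ε³ < 1`, hence `k = l = 0`.
So the lattice points of the cube are the multiples `m a₃*` with `|m| ≤ 1`, and `a₃*` lies on the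
boundary of the cube, which gives `μ₁ = 1`.
-/

open Metric

lemma setOf_forall_abs_le_eq_closedBall {ι : Type*} [Fintype ι] {r : ℝ} (hr : 0 ≤ r) :
    {z : ι → ℝ | ∀ i, |z i| ≤ r} = closedBall 0 r := by
  ext z
  simp only [Set.mem_ofPred_eq, mem_closedBall, dist_zero_right, pi_norm_le_iff_of_nonneg hr,
    Real.norm_eq_abs]

lemma Int.eq_zero_of_abs_div_le {n : ℤ} {c δ : ℝ} (hc : 0 < c) (hδ : δ * c < 1)
    (h : |(n : ℝ) / c| ≤ δ) : n = 0 := by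
  rw [abs_div, abs_of_pos hc, div_le_iff₀ hc] at h
  rw [← Int.abs_lt_one_iff, ← Int.cast_lt (R := ℝ), Int.cast_abs, Int.cast_one]
  linarith

section ShortVectorsOnLine

variable {E : Type*} [NormedAddCommGroup E] [NormedSpace ℝ E] {Λ : Set E} {a : E} {r : ℝ}

lemma closedBall_inter_eq_of_short_mem_zmultiples (ha : ‖a‖ = r)
    (hshort : ∀ v ∈ Λ, ‖v‖ ≤ r → v ∈ AddSubgroup.zmultiples a)
    (hmul : (AddSubgroup.zmultiples a : Set E) ⊆ Λ) :
    closedBall 0 r ∩ Λ = {0, a, -a} := by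
  have hr : 0 ≤ r := ha ▸ norm_nonneg a
  ext v
  constructor
  · rintro ⟨hv, hvΛ⟩
    obtain ⟨m, rfl⟩ := AddSubgroup.mem_zmultiples_iff.mp
      (hshort v hvΛ (mem_closedBall_zero_iff.mp hv))
    rcases eq_or_ne a 0 with rfl | ha0
    · simp
    have hm : |(m : ℝ)| ≤ 1 := by
      rw [mem_closedBall_zero_iff, ← Int.cast_smul_eq_zsmul ℝ, norm_smul, Real.norm_eq_abs,
        ha] at hv
      have hr0 : 0 < r := ha ▸ norm_pos_iff.mpr ha0
      nlinarith
    rw [← Int.cast_abs, ← Int.cast_one, Int.cast_le] at hm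
    obtain rfl | rfl | rfl : m = -1 ∨ m = 0 ∨ m = 1 := by rw [abs_le] at hm; omega
    all_goals simp
  · have hnorm : ∀ m : ℤ, |m| ≤ 1 → m • a ∈ closedBall 0 r ∩ Λ := fun m hm =>
      ⟨by
        rw [mem_closedBall_zero_iff, ← Int.cast_smul_eq_zsmul ℝ, norm_smul, Real.norm_eq_abs, ha,
          ← Int.cast_abs]
        exact mul_le_of_le_one_left hr (by exact_mod_cast hm),
        hmul (AddSubgroup.mem_zmultiples_iff.mpr ⟨m, rfl⟩)⟩
    rintro (rfl | rfl | rfl)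
    · simpa using hnorm 0
    · simpa using hnorm 1
    · simpa using hnorm (-1)

lemma ball_inter_eq_of_short_mem_zmultiples (ha : ‖a‖ = r)
    (hshort : ∀ v ∈ Λ, ‖v‖ ≤ r → v ∈ AddSubgroup.zmultiples a)
    (hmul : (AddSubgroup.zmultiples a : Set E) ⊆ Λ) (hr : 0 < r) :
    ball 0 r ∩ Λ = {0} := by
  have hsub : ball 0 r ∩ Λ ⊆ {0, a, -a} :=
    closedBall_inter_eq_of_short_mem_zmultiples ha hshort hmul ▸
      Set.inter_subset_inter_left Λ ball_subset_closedBall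
  ext v
  constructor
  · intro hv
    rcases hsub hv with rfl | rfl | rfl
    · rfl
    · exact absurd ha (mem_ball_zero_iff.mp hv.1).ne
    · exact absurd (norm_neg a ▸ ha) (mem_ball_zero_iff.mp hv.1).ne
  · rintro rfl
    exact ⟨mem_ball_self hr, hmul (zero_mem _)⟩

end ShortVectorsOnLine

lemma firstMin_closedBall_eq_one {Λ : Set (Fin 3 → ℝ)} {a : Fin 3 → ℝ} {r : ℝ} (haΛ : a ∈ Λ)
    (ha0 : a ≠ 0) (ha : ‖a‖ ≤ r) (hball : ball 0 r ∩ Λ ⊆ {0}) :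
    firstMin Λ (closedBall 0 r) = 1 := by
  have hr : 0 < r := (norm_pos_iff.mpr ha0).trans_le ha
  have hone : (1 : ℝ) ∈ {μ : ℝ | 0 < μ ∧ ∃ v ∈ Λ, v ≠ 0 ∧ v ∈ μ • closedBall 0 r} :=
    ⟨one_pos, a, haΛ, ha0, by rwa [one_smul, mem_closedBall_zero_iff]⟩
  refine le_antisymm (csInf_le ⟨0, fun μ hμ => hμ.1.le⟩ hone) (le_csInf ⟨1, hone⟩ ?_)
  rintro μ ⟨hμ, v, hvΛ, hv0, hv⟩
  by_contra! hμ1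
  rw [smul_closedBall _ _ hr.le, smul_zero, Real.norm_eq_abs, abs_of_pos hμ] at hv
  have hvball : v ∈ ball 0 r :=
    mem_ball_zero_iff.mpr ((mem_closedBall_zero_iff.mp hv).trans_lt (by nlinarith))
  exact hv0 (hball ⟨hvball, hvΛ⟩)

section Example

variable {ε : ℝ}

noncomputable def exampleMatrix (ε : ℝ) : Matrix (Fin 3) (Fin 3) ℝ :=
  !![ε / Real.sqrt 3,    2*ε / Real.sqrt 3, 1/(3*ε^2);
     ε / Real.sqrt 3,    -ε / Real.sqrt 3,  1/(3*ε^2);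
     -2*ε / Real.sqrt 3, -ε / Real.sqrt 3,  1/(3*ε^2)]

/-- Its columns are `a₁* = (0, 1, -1)/(ε√3)`, `a₂* = (1, -1, 0)/(ε√3)` and `a₃* = (ε², ε², ε²)`. -/
noncomputable def exampleDualMatrix (ε : ℝ) : Matrix (Fin 3) (Fin 3) ℝ :=
  !![0, 1 / (ε * √3), ε ^ 2;
     1 / (ε * √3), -1 / (ε * √3), ε ^ 2;
     -1 / (ε * √3), 0, ε ^ 2]

lemma inv_transpose_exampleMatrix (hε : ε ≠ 0) : (exampleMatrix ε)ᵀ⁻¹ = exampleDualMatrix ε := by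
  refine inv_eq_right_inv ?_
  have hs : √3 ^ 2 = 3 := Real.sq_sqrt (by norm_num)
  have hs0 : √3 ≠ 0 := by positivity
  ext i j
  fin_cases i <;> fin_cases j <;>
    simp [exampleMatrix, exampleDualMatrix, mul_apply, Fin.sum_univ_three, one_apply] <;>
    field_simp <;> linarith [hs]

lemma exampleDualMatrix_mulVec (x : Fin 3 → ℝ) :
    exampleDualMatrix ε *ᵥ x =
      ![x 1 / (ε * √3) + ε ^ 2 * x 2, (x 0 - x 1) / (ε * √3) + ε ^ 2 * x 2,
        -x 0 / (ε * √3) + ε ^ 2 * x 2] := by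
  ext i
  fin_cases i <;> simp [exampleDualMatrix, mulVec, dotProduct, Fin.sum_univ_three] <;> ring

lemma exampleDualMatrix_mulVec_eq_zsmul {x : Fin 3 → ℤ} (h0 : x 0 = 0) (h1 : x 1 = 0) :
    exampleDualMatrix ε *ᵥ (fun i => (x i : ℝ)) = x 2 • fun _ => ε ^ 2 := by
  ext i
  fin_cases i <;> simp [exampleDualMatrix_mulVec, h0, h1, ← Int.cast_smul_eq_zsmul ℝ, mul_comm]

lemma exampleDualMatrix_mulVec_mem_zmultiples (hε0 : 0 < ε) (hε : ε ≤ 1 / 2) (x : Fin 3 → ℤ)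
    (hx : ‖exampleDualMatrix ε *ᵥ (fun i => (x i : ℝ))‖ ≤ ε ^ 2) :
    exampleDualMatrix ε *ᵥ (fun i => (x i : ℝ)) ∈ AddSubgroup.zmultiples fun _ => ε ^ 2 := by
  set v := exampleDualMatrix ε *ᵥ (fun i => (x i : ℝ)) with hv
  have hcoord : ∀ i, |v i| ≤ ε ^ 2 := fun i => (norm_le_pi_norm v i).trans hx
  have hdiff : ∀ i j, |v i - v j| ≤ 2 * ε ^ 2 := fun i j =>
    (abs_sub _ _).trans (by linarith [hcoord i, hcoord j])
  have hsmall : 2 * ε ^ 2 * (ε * √3) < 1 := by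
    have hs : √3 < 2 := (Real.sqrt_lt' two_pos).mpr (by norm_num)
    have hε3 : ε ^ 3 ≤ (1 / 2) ^ 3 := pow_le_pow_left₀ hε0.le hε 3
    nlinarith [pow_pos hε0 3]
  have hεs : 0 < ε * √3 := by positivity
  have h02 : v 0 - v 2 = ((x 0 + x 1 : ℤ) : ℝ) / (ε * √3) := by
    simp only [hv, exampleDualMatrix_mulVec, cons_val_zero, cons_val, Int.cast_add]
    ring
  have h01 : v 0 - v 1 = ((2 * x 1 - x 0 : ℤ) : ℝ) / (ε * √3) := by
    simp only [hv, exampleDualMatrix_mulVec, cons_val_zero, cons_val_one, Int.cast_sub,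
      Int.cast_mul, Int.cast_ofNat]
    ring
  have hk := Int.eq_zero_of_abs_div_le hεs hsmall (h02 ▸ hdiff 0 2)
  have hl := Int.eq_zero_of_abs_div_le hεs hsmall (h01 ▸ hdiff 0 1)
  rw [hv, exampleDualMatrix_mulVec_eq_zsmul (by omega) (by omega)]
  exact AddSubgroup.zsmul_mem_zmultiples _ _

end Example

/-- For `0 < ε ≤ 1/2`, with `A` the matrix of the paper's example and
`Λ₁* = (Aᵀ)⁻¹ℤ³`, the point `a₃* = (ε², ε², ε²)` lies on the boundary of the
cube `Π* = [-ε²,ε²]³`, the only points of `Λ₁*` in `Π*` are `0` and `±a₃*`,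
the interior of `Π*` contains no nonzero point of `Λ₁*`, and
`μ₁(Π*, Λ₁*) = 1`. -/
theorem stmt_19 (ε : ℝ) (hε0 : 0 < ε) (hε : ε ≤ 1/2) :
    let A : Matrix (Fin 3) (Fin 3) ℝ :=
      !![ε / Real.sqrt 3,    2*ε / Real.sqrt 3, 1/(3*ε^2);
         ε / Real.sqrt 3,    -ε / Real.sqrt 3,  1/(3*ε^2);
         -2*ε / Real.sqrt 3, -ε / Real.sqrt 3,  1/(3*ε^2)]
    let Λ : Set (Fin 3 → ℝ) :=
      Set.range (fun x : Fin 3 → ℤ => (Aᵀ)⁻¹.mulVec (fun i => (x i : ℝ)))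
    let P : Set (Fin 3 → ℝ) := {z | ∀ i, |z i| ≤ ε ^ 2}
    let a : Fin 3 → ℝ := fun _ => ε ^ 2
    a ∈ frontier P ∧
      P ∩ Λ = {0, a, -a} ∧
      interior P ∩ Λ = {0} ∧
      firstMin Λ P = 1 := by
  intro A Λ P a
  have hε2 : 0 < ε ^ 2 := by positivity
  have hP : P = closedBall 0 (ε ^ 2) := setOf_forall_abs_le_eq_closedBall hε2.le
  have hΛ : Λ = Set.range fun x : Fin 3 → ℤ => exampleDualMatrix ε *ᵥ fun i => (x i : ℝ) := by
    rw [← inv_transpose_exampleMatrix hε0.ne']; rfl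
  have ha : ‖a‖ = ε ^ 2 := by rw [pi_norm_const, Real.norm_eq_abs, abs_of_pos hε2]
  have hshort : ∀ v ∈ Λ, ‖v‖ ≤ ε ^ 2 → v ∈ AddSubgroup.zmultiples a := by
    rw [hΛ]
    rintro _ ⟨x, rfl⟩ hx
    exact exampleDualMatrix_mulVec_mem_zmultiples hε0 hε x hx
  have hmul : (AddSubgroup.zmultiples a : Set (Fin 3 → ℝ)) ⊆ Λ := by
    rintro _ ⟨m, rfl⟩
    rw [hΛ]
    exact ⟨![0, 0, m], exampleDualMatrix_mulVec_eq_zsmul rfl rfl⟩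
  have hball := ball_inter_eq_of_short_mem_zmultiples ha hshort hmul hε2
  rw [hP, frontier_closedBall _ hε2.ne', interior_closedBall _ hε2.ne']
  refine ⟨mem_sphere_zero_iff_norm.mpr ha,
    closedBall_inter_eq_of_short_mem_zmultiples ha hshort hmul, hball, ?_⟩
  refine firstMin_closedBall_eq_one (hmul (AddSubgroup.mem_zmultiples a)) ?_ ha.le hball.subset
  exact fun h => hε2.ne' (congrFun h 0)
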